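/- arXiv:1204.6677 — 2 statements merged into one kernel-verified Lean document; each statement's English description precedes it below -/
import Mathlib

section
/- For every dimension n, and all δ > 0 and w̄ ∈ (0, c_n), there exists δ′ = δ′(n, δ, w̄) > 0 (one may take δ′ = w̄ δⁿ/2 when δ < 1) with the following property: if (M, p) is a complete pointed Riemannian manifold of dimension n with vol(B(p, R_p)) ≤ δ′ R_p^n, then r_p ≤ δ R_p. -/
noncomputable section

open scoped ENNReal

set_option autoImplicit false

/-- `c_n`, the volume of the Euclidean unit ball in `ℝⁿ`. -/
def euclideanUnitBallVolume (n : ℕ) : ℝ :=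
  (MeasureTheory.volume (Metric.ball (0 : EuclideanSpace ℝ (Fin n)) 1)).toReal

/-- Abstract packaging of a complete Riemannian `n`-manifold: the underlying
metric space (with the geodesic distance) together with the derived geometric
data appearing in the statements — the volumes of metric balls, the predicate
`curvOpGEOn p r κ` that the curvature operator is `≥ κ·Id` on `B(p,r)`, and
the predicate `covRiemBoundOn p r k C` that `|∇^k Riem| ≤ C` on `B(p,r)`.
(Mathlib does not yet have Riemannian metrics, so the curvature and volume
data are carried abstractly, with their basic coherence properties.) -/
structure RiemannianManifoldData (n : ℕ) : Type 1 where
  M : Type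
  met : MetricSpace M
  complete : @CompleteSpace M met.toUniformSpace
  charts : @ChartedSpace (EuclideanSpace ℝ (Fin n)) _ M
    met.toUniformSpace.toTopologicalSpace
  /-- `volBall p r` is the Riemannian volume of the metric ball `B(p,r)` -/
  volBall : M → ℝ → ℝ
  volBall_nonneg : ∀ p r, 0 ≤ volBall p r
  volBall_zero : ∀ p, volBall p 0 = 0
  volBall_mono : ∀ p, Monotone (volBall p)
  volBall_cont : ∀ p, Continuous (volBall p)
  /-- small balls have asymptotically Euclidean volume -/
  volBall_small : ∀ p : M, Filter.Tendsto (fun r : ℝ => volBall p r / r ^ n)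
    (nhdsWithin 0 (Set.Ioi 0)) (nhds (euclideanUnitBallVolume n))
  /-- abstract record: the curvature operator is `≥ κ·Id` on `B(p,r)` -/
  curvOpGEOn : M → ℝ → ℝ → Prop
  curvOpGEOn_mono : ∀ p r κ κ', κ' ≤ κ → curvOpGEOn p r κ → curvOpGEOn p r κ'
  curvOpGEOn_anti : ∀ p r r' κ, r' ≤ r → curvOpGEOn p r κ → curvOpGEOn p r' κ
  /-- abstract record: `|∇^k Riem| ≤ C` on `B(p,r)` -/
  covRiemBoundOn : M → ℝ → ℕ → ℝ → Prop

namespace RiemannianManifoldData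

variable {n : ℕ}

/-- `R` is the curvature scale `R_p` at `p` (Definition 7 of the paper): it
is `∞` if the curvature operator is nonnegative (on all balls around `p`),
and otherwise the unique `r > 0` such that the smallest eigenvalue of the
curvature operator on `B(p,r)` is `-1/r²`. -/
def IsCurvatureScale (X : RiemannianManifoldData n) (p : X.M) (R : ℝ≥0∞) :
    Prop :=
  (R = ∞ ∧ ∀ r : ℝ, X.curvOpGEOn p r 0) ∨
  (∃ r : ℝ, 0 < r ∧ R = ENNReal.ofReal r ∧
    X.curvOpGEOn p r (-(1 / r ^ 2)) ∧
    ∀ κ : ℝ, -(1 / r ^ 2) < κ → ¬ X.curvOpGEOn p r κ)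

/-- `rp` is the `w`-volume scale at `p` (Definition 8 of the paper):
`r_p = inf { r > 0 : vol B(p,r) = w·rⁿ }`, with `r_p = ∞` if there is no such
`r`. -/
def IsVolumeScale (X : RiemannianManifoldData n) (w : ℝ) (p : X.M)
    (rp : ℝ≥0∞) : Prop :=
  ({r : ℝ | 0 < r ∧ X.volBall p r = w * r ^ n} = ∅ ∧ rp = ∞) ∨
  ({r : ℝ | 0 < r ∧ X.volBall p r = w * r ^ n}.Nonempty ∧
    rp = ENNReal.ofReal (sInf {r : ℝ | 0 < r ∧ X.volBall p r = w * r ^ n}))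

end RiemannianManifoldData

/-!
**Lemma 5(1).**  For every dimension `n` and all `δ > 0`, `w̄ ∈ (0, c_n)`,
there exists `δ′ = δ′(n, δ, w̄) > 0` (one may take `δ′ = w̄ δⁿ/2` when
`δ < 1`) such that: if `(M,p)` is a complete pointed Riemannian `n`-manifold
with `vol(B(p, R_p)) ≤ δ′ R_pⁿ`, then `r_p ≤ δ R_p`.
-/
theorem volume_scale_le_of_small_volume
    (n : ℕ) (δ w : ℝ) (hδ : 0 < δ) (hw : 0 < w)
    (hw' : w < euclideanUnitBallVolume n) :
    ∃ δ' : ℝ, 0 < δ' ∧ (δ < 1 → δ' = w * δ ^ n / 2) ∧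
      ∀ (X : RiemannianManifoldData n) (p : X.M) (R rp : ℝ≥0∞),
        X.IsCurvatureScale p R → X.IsVolumeScale w p rp →
        (R = ∞ ∨ X.volBall p R.toReal ≤ δ' * R.toReal ^ n) →
        rp ≤ ENNReal.ofReal δ * R := by
  have hm : 0 < min δ 1 := lt_min hδ one_pos
  refine ⟨w * (min δ 1) ^ n / 2, by positivity, ?_, ?_⟩
  · intro h1; rw [min_eq_left h1.le]
  intro X p R rp hR hrp hvol
  rcases eq_or_ne R ∞ with hRtop | hRtop
  · rw [hRtop, ENNReal.mul_top (ENNReal.ofReal_pos.mpr hδ).ne']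
    exact le_top
  rcases hR with ⟨hR1, _⟩ | ⟨r, hr0, hRr, _⟩
  · exact absurd hR1 hRtop
  have hRto : R.toReal = r := by rw [hRr, ENNReal.toReal_ofReal hr0.le]
  have hvol' : X.volBall p r ≤ w * (min δ 1) ^ n / 2 * r ^ n := by
    rcases hvol with h | h
    · exact absurd h hRtop
    · rwa [hRto] at h
  set s₀ : ℝ := min δ 1 * r with hs₀
  have hs₀0 : 0 < s₀ := mul_pos hm hr0
  have hs₀r : s₀ ≤ r := by
    calc s₀ ≤ 1 * r := mul_le_mul_of_nonneg_right (min_le_right _ _) hr0.le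
    _ = r := one_mul r
  -- volume at s₀ is small
  have hvs₀ : X.volBall p s₀ < w * s₀ ^ n := by
    have h1 : X.volBall p s₀ ≤ X.volBall p r := X.volBall_mono p hs₀r
    have h2 : w * (min δ 1) ^ n / 2 * r ^ n = w * s₀ ^ n / 2 := by
      rw [hs₀, mul_pow]; ring
    have h3 : w * s₀ ^ n / 2 < w * s₀ ^ n := by
      have : 0 < w * s₀ ^ n := by positivity
      linarith
    calc X.volBall p s₀ ≤ w * (min δ 1) ^ n / 2 * r ^ n := h1.trans hvol'
    _ = w * s₀ ^ n / 2 := h2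
    _ < w * s₀ ^ n := h3
  -- find a small s₁ with large volume ratio
  have hev : ∀ᶠ s in nhdsWithin (0 : ℝ) (Set.Ioi 0),
      w < X.volBall p s / s ^ n :=
    (X.volBall_small p).eventually (eventually_gt_nhds hw')
  have hmem : Set.Ioo (0 : ℝ) s₀ ∈ nhdsWithin (0 : ℝ) (Set.Ioi 0) :=
    Ioo_mem_nhdsGT_of_mem ⟨le_refl 0, hs₀0⟩
  obtain ⟨s₁, hs₁w, hs₁Ioo⟩ :=
    (hev.and (Filter.eventually_of_mem hmem fun x hx => hx)).exists
  have hs₁0 : 0 < s₁ := hs₁Ioo.1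
  have hvs₁ : w * s₁ ^ n < X.volBall p s₁ :=
    (lt_div_iff₀ (pow_pos hs₁0 n)).mp hs₁w
  -- IVT for g s = volBall p s - w * s^n on [s₁, s₀]
  have hg : ContinuousOn (fun s => X.volBall p s - w * s ^ n)
      (Set.Icc s₁ s₀) :=
    ((X.volBall_cont p).sub (continuous_const.mul (continuous_pow n))).continuousOn
  have h0mem : (0 : ℝ) ∈ Set.Icc (X.volBall p s₀ - w * s₀ ^ n)
      (X.volBall p s₁ - w * s₁ ^ n) := ⟨by linarith, by linarith⟩
  obtain ⟨s, hsIcc, hseq⟩ := intermediate_value_Icc' hs₁Ioo.2.le hg h0mem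
  have hs0 : 0 < s := lt_of_lt_of_le hs₁0 hsIcc.1
  have hseq' : X.volBall p s = w * s ^ n := by linarith [sub_eq_zero.mp hseq]
  set S : Set ℝ := {x : ℝ | 0 < x ∧ X.volBall p x = w * x ^ n} with hS
  have hsS : s ∈ S := ⟨hs0, hseq'⟩
  rcases hrp with ⟨hempty, _⟩ | ⟨_, hrpeq⟩
  · exact absurd hempty (Set.nonempty_iff_ne_empty.mp ⟨s, hsS⟩)
  have hbdd : BddBelow S := ⟨0, fun x hx => hx.1.le⟩
  have hinf : sInf S ≤ δ * r := by
    calc sInf S ≤ s := csInf_le hbdd hsS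
    _ ≤ s₀ := hsIcc.2
    _ ≤ δ * r := mul_le_mul_of_nonneg_right (min_le_left _ _) hr0.le
  calc rp = ENNReal.ofReal (sInf S) := hrpeq
  _ ≤ ENNReal.ofReal (δ * r) := ENNReal.ofReal_le_ofReal hinf
  _ = ENNReal.ofReal δ * R := by rw [hRr, ENNReal.ofReal_mul hδ.le]
end
end

section
/- For every dimension n, and all r, δ > 0 and w̄ ∈ (0, c_n), there exists δ′ = δ′(n, r, δ, w̄) > 0 (one may take δ′ = ½ w̄ min(rⁿ, δⁿ)) with the following property: if (M, p) is a complete pointed Riemannian manifold of dimension n whose curvature operator is bounded below by −Id and vol(B(p, r)) ≤ δ′, then r_p ≤ δ R_p. -/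
noncomputable section

open scoped ENNReal

set_option autoImplicit false

/-!
**Lemma 5(2).**  For every dimension `n` and all `r, δ > 0`, `w̄ ∈ (0, c_n)`,
there exists `δ′ = δ′(n, r, δ, w̄) > 0` (one may take
`δ′ = ½ w̄ min(rⁿ, δⁿ)`) such that: if `(M,p)` is a complete pointed
Riemannian `n`-manifold whose curvature operator is bounded below by `-Id`
and `vol(B(p,r)) ≤ δ′`, then `r_p ≤ δ R_p`.
-/
theorem volume_scale_le_of_small_volume_of_curv_bound
    (n : ℕ) (r δ w : ℝ) (hr : 0 < r) (hδ : 0 < δ) (hw : 0 < w)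
    (hw' : w < euclideanUnitBallVolume n) :
    ∃ δ' : ℝ, 0 < δ' ∧ δ' = w * min (r ^ n) (δ ^ n) / 2 ∧
      ∀ (X : RiemannianManifoldData n) (p : X.M) (R rp : ℝ≥0∞),
        (∀ (q : X.M) (ρ : ℝ), X.curvOpGEOn q ρ (-1)) →
        X.IsCurvatureScale p R → X.IsVolumeScale w p rp →
        X.volBall p r ≤ δ' →
        rp ≤ ENNReal.ofReal δ * R := by
  set m := min r δ with hm
  have hm0 : 0 < m := lt_min hr hδ
  have hminpow : min (r ^ n) (δ ^ n) = m ^ n := by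
    rcases le_total r δ with h | h
    · simp only [hm]
      rw [min_eq_left h, min_eq_left (pow_le_pow_left₀ hr.le h n)]
    · simp only [hm]
      rw [min_eq_right h, min_eq_right (pow_le_pow_left₀ hδ.le h n)]
  refine ⟨w * min (r ^ n) (δ ^ n) / 2, by positivity, rfl, ?_⟩
  intro X p R rp hcurv hR hrp hvol
  -- Step 1: 1 ≤ R
  have hR1 : 1 ≤ R := by
    rcases hR with ⟨hRe, -⟩ | ⟨r₀, hr₀, hRe, hcurv₀, hmax⟩
    · simp [hRe]
    · have h1 : ¬ (-(1 / r₀ ^ 2) < -1) := fun h => hmax _ h (hcurv p r₀)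
      push_neg at h1
      have h2 : 1 / r₀ ^ 2 ≤ 1 := by linarith
      have hr₀sq : (0:ℝ) < r₀ ^ 2 := by positivity
      have h3 : 1 ≤ r₀ ^ 2 := (div_le_one hr₀sq).mp h2
      have h4 : 1 ≤ r₀ := by nlinarith
      rw [hRe]
      exact ENNReal.one_le_ofReal.mpr h4
  -- Step 2: the volume-scale set has an element ≤ m
  set S := {x : ℝ | 0 < x ∧ X.volBall p x = w * x ^ n} with hS
  have hev : ∀ᶠ ρ in nhdsWithin (0:ℝ) (Set.Ioi 0),
      w < X.volBall p ρ / ρ ^ n :=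
    (X.volBall_small p).eventually (eventually_gt_nhds hw')
  have hmem : Set.Ioo (0:ℝ) m ∈ nhdsWithin (0:ℝ) (Set.Ioi 0) :=
    Ioo_mem_nhdsGT_of_mem ⟨le_refl 0, hm0⟩
  obtain ⟨ε, hεw, hε0, hεm⟩ := (hev.and (Filter.eventually_of_mem hmem (fun x hx => hx))).exists
  have hεpow : (0:ℝ) < ε ^ n := by positivity
  have hfε : w * ε ^ n ≤ X.volBall p ε := ((lt_div_iff₀ hεpow).mp hεw).le
  have hfm : X.volBall p m < w * m ^ n := by
    have h1 : X.volBall p m ≤ X.volBall p r := X.volBall_mono p (min_le_left _ _)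
    have h2 : (0:ℝ) < w * m ^ n := by positivity
    calc X.volBall p m ≤ w * min (r ^ n) (δ ^ n) / 2 := h1.trans hvol
      _ = w * m ^ n / 2 := by rw [hminpow]
      _ < w * m ^ n := by linarith
  -- IVT
  have hcont : ContinuousOn (fun x => X.volBall p x - w * x ^ n) (Set.Icc ε m) :=
    ((X.volBall_cont p).sub (by continuity)).continuousOn
  have hIVT := intermediate_value_Icc' hεm.le hcont
  have h0mem : (0:ℝ) ∈ Set.Icc (X.volBall p m - w * m ^ n)
      (X.volBall p ε - w * ε ^ n) := ⟨by linarith, by linarith⟩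
  obtain ⟨x, hxmem, hx0⟩ := hIVT h0mem
  have hxS : x ∈ S := ⟨hε0.trans_le hxmem.1, by dsimp at hx0; linarith⟩
  have hSne : S.Nonempty := ⟨x, hxS⟩
  have hbdd : BddBelow S := ⟨0, fun y hy => hy.1.le⟩
  have hsInf : sInf S ≤ δ :=
    (csInf_le hbdd hxS).trans (hxmem.2.trans (min_le_right r δ))
  -- Conclude
  rcases hrp with ⟨hempty, -⟩ | ⟨-, hrpe⟩
  · rw [hS, hempty] at hxS
    exact absurd hxS (Set.notMem_empty x)
  · calc rp = ENNReal.ofReal (sInf S) := hrpe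
      _ ≤ ENNReal.ofReal δ := ENNReal.ofReal_le_ofReal hsInf
      _ = ENNReal.ofReal δ * 1 := (mul_one _).symm
      _ ≤ ENNReal.ofReal δ * R := mul_le_mul_right hR1 _
end
end
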